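/- In the scheme DualHE, homomorphic NAND evaluation preserves the ciphertext form: if C_b = A'S_b + E_b + μ_b G (mod q) for b ∈ {0,1} with μ_b ∈ {0,1}, then G − C_0 · G^{−1}(C_1) = A'S' + E' + (1 − μ_0 μ_1) G where S' = −S_0 · G^{−1}(C_1) − μ_0 S_1 and E' = −E_0 · G^{−1}(C_1) − μ_0 E_1. Moreover, if ‖E_0‖_∞ ≤ β and ‖E_1‖_∞ ≤ β then ‖E'‖_∞ ≤ β(N+1). -/

import Mathlib

open Matrix

/-- The representative of `x : ZMod q` in `(−q/2, q/2]`. -/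
def zrep (q : ℕ) [NeZero q] (x : ZMod q) : ℤ :=
  if 2 * (x.val : ℤ) ≤ (q : ℤ) then (x.val : ℤ) else (x.val : ℤ) - q

/-- The absolute value `|x|` of the representative of `x : ZMod q` in `(−q/2, q/2]`. -/
def zqabs (q : ℕ) [NeZero q] (x : ZMod q) : ℤ := |zrep q x|

/-! The identity is ring arithmetic once `G · G⁻¹(C₁) = C₁` turns `μ₀ G · G⁻¹(C₁)` into `μ₀ C₁`.
For the noise, `zqabs` is the least absolute value of an integer lift, hence subadditive and
invariant under negation; an entry of `E₀ · G⁻¹(C₁)` is a sum of at most `N` entries of `E₀`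
because `G⁻¹` is binary, and `μ₀ E₁` adds at most one more `β`. -/

section ZModAbs

variable {q : ℕ} [NeZero q]

lemma intCast_zrep (x : ZMod q) : ((zrep q x : ℤ) : ZMod q) = x := by
  unfold zrep
  split_ifs <;> simp

lemma two_mul_zrep_mem_Ioc (x : ZMod q) : 2 * zrep q x ∈ Set.Ioc (-(q : ℤ)) q := by
  have hlt : (x.val : ℤ) < q := by exact_mod_cast ZMod.val_lt x
  unfold zrep
  split_ifs <;> constructor <;> omega

lemma zqabs_le_abs_of_intCast_eq {x : ZMod q} {a : ℤ} (h : (a : ZMod q) = x) :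
    zqabs q x ≤ |a| := by
  obtain ⟨k, hk⟩ : (q : ℤ) ∣ a - zrep q x := by
    rw [← ZMod.intCast_zmod_eq_zero_iff_dvd]
    push_cast
    rw [h, intCast_zrep, sub_self]
  obtain ⟨hlo, hhi⟩ := two_mul_zrep_mem_Ioc x
  have hqk : (q : ℤ) * k = 0 ∨ (q : ℤ) ≤ q * k ∨ (q : ℤ) * k ≤ -q := by
    rcases lt_trichotomy k 0 with hk | hk | hk
    · exact .inr (.inr (by nlinarith))
    · exact .inl (by simp [hk])
    · exact .inr (.inl (by nlinarith))
  rw [zqabs]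
  rcases abs_cases a with ⟨ha, ha'⟩ | ⟨ha, ha'⟩ <;>
    rcases abs_cases (zrep q x) with ⟨hz, hz'⟩ | ⟨hz, hz'⟩ <;> omega

lemma zqabs_zero : zqabs q 0 = 0 := by
  simp [zqabs, zrep]

lemma zqabs_neg_le (x : ZMod q) : zqabs q (-x) ≤ zqabs q x :=
  (zqabs_le_abs_of_intCast_eq (a := -zrep q x) (by push_cast [intCast_zrep]; rfl)).trans_eq
    (abs_neg _)

lemma zqabs_neg (x : ZMod q) : zqabs q (-x) = zqabs q x :=
  le_antisymm (zqabs_neg_le x) (by simpa using zqabs_neg_le (-x))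

lemma zqabs_add_le (x y : ZMod q) : zqabs q (x + y) ≤ zqabs q x + zqabs q y :=
  calc zqabs q (x + y) ≤ |zrep q x + zrep q y| :=
        zqabs_le_abs_of_intCast_eq (by push_cast [intCast_zrep]; rfl)
    _ ≤ zqabs q x + zqabs q y := abs_add_le _ _

lemma zqabs_sub_le (x y : ZMod q) : zqabs q (x - y) ≤ zqabs q x + zqabs q y := by
  simpa only [sub_eq_add_neg, zqabs_neg] using zqabs_add_le x (-y)

lemma zqabs_sum_le {ι : Type*} (s : Finset ι) (f : ι → ZMod q) :
    zqabs q (∑ i ∈ s, f i) ≤ ∑ i ∈ s, zqabs q (f i) :=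
  Finset.le_sum_of_subadditive (zqabs q) zqabs_zero.le zqabs_add_le s f

lemma zqabs_mul_le_of_bit (x b : ZMod q) (hb : b = 0 ∨ b = 1) :
    zqabs q (x * b) ≤ zqabs q x := by
  rcases hb with rfl | rfl
  · rw [mul_zero, zqabs_zero]
    exact abs_nonneg _
  · rw [mul_one]

end ZModAbs

section NAND

variable {R ι κ ν ρ : Type*} [Fintype κ]

lemma nand_sub_mul_eq [CommRing R] [Fintype ν]
    (A : Matrix ι ν R) (S₀ S₁ : Matrix ν κ R) (E₀ E₁ G : Matrix ι κ R) (X : Matrix κ κ R)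
    (μ₀ μ₁ : R) (hX : G * X = A * S₁ + E₁ + μ₁ • G) :
    G - (A * S₀ + E₀ + μ₀ • G) * X =
      A * (-(S₀ * X) - μ₀ • S₁) + (-(E₀ * X) - μ₀ • E₁) + (1 - μ₀ * μ₁) • G := by
  rw [Matrix.add_mul, Matrix.add_mul, Matrix.smul_mul, hX, Matrix.mul_assoc, Matrix.mul_sub,
    Matrix.mul_neg, Matrix.mul_smul]
  simp only [smul_add, smul_smul, sub_smul, one_smul]
  abel

variable {q : ℕ} [NeZero q]

lemma zqabs_mul_apply_le_of_binary (E : Matrix ι κ (ZMod q)) (X : Matrix κ ρ (ZMod q))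
    (hX : ∀ k j, X k j = 0 ∨ X k j = 1) (i : ι) (j : ρ) :
    zqabs q ((E * X) i j) ≤ ∑ k, zqabs q (E i k) :=
  (zqabs_sum_le _ _).trans <| Finset.sum_le_sum fun k _ => zqabs_mul_le_of_bit _ _ (hX k j)

lemma zqabs_nand_noise_le (E₀ : Matrix ι κ (ZMod q)) (E₁ : Matrix ι ρ (ZMod q))
    (X : Matrix κ ρ (ZMod q)) (hX : ∀ k j, X k j = 0 ∨ X k j = 1) (μ : ZMod q)
    (hμ : μ = 0 ∨ μ = 1) (β : ℝ) (hE₀ : ∀ i k, (zqabs q (E₀ i k) : ℝ) ≤ β)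
    (hE₁ : ∀ i j, (zqabs q (E₁ i j) : ℝ) ≤ β) (i : ι) (j : ρ) :
    (zqabs q ((-(E₀ * X) - μ • E₁) i j) : ℝ) ≤ β * (Fintype.card κ + 1) := by
  have hmul : (zqabs q ((E₀ * X) i j) : ℝ) ≤ Fintype.card κ * β := by
    calc (zqabs q ((E₀ * X) i j) : ℝ) ≤ ∑ k, (zqabs q (E₀ i k) : ℝ) := by
          exact_mod_cast zqabs_mul_apply_le_of_binary E₀ X hX i j
      _ ≤ ∑ _k : κ, β := Finset.sum_le_sum fun k _ => hE₀ i k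
      _ = Fintype.card κ * β := by simp
  have hsmul : (zqabs q ((μ • E₁) i j) : ℝ) ≤ β := by
    rw [Matrix.smul_apply, smul_eq_mul, mul_comm]
    exact (Int.cast_le.2 (zqabs_mul_le_of_bit _ _ hμ)).trans (hE₁ i j)
  have hsub : zqabs q ((-(E₀ * X) - μ • E₁) i j) ≤
      zqabs q ((E₀ * X) i j) + zqabs q ((μ • E₁) i j) := by
    simpa only [Matrix.sub_apply, Matrix.neg_apply, zqabs_neg] using
      zqabs_sub_le (-(E₀ * X) i j) ((μ • E₁) i j)
  calc (zqabs q ((-(E₀ * X) - μ • E₁) i j) : ℝ)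
      ≤ zqabs q ((E₀ * X) i j) + zqabs q ((μ • E₁) i j) := by exact_mod_cast hsub
    _ ≤ β * (Fintype.card κ + 1) := by linarith

end NAND

theorem dualHE_nand_ciphertext_form_general (q n m N : ℕ) [NeZero q]
    (A' : Matrix (Fin (m + 1)) (Fin n) (ZMod q))
    (S0 S1 : Matrix (Fin n) (Fin N) (ZMod q))
    (E0 E1 G : Matrix (Fin (m + 1)) (Fin N) (ZMod q))
    (Ginv : Matrix (Fin (m + 1)) (Fin N) (ZMod q) → Matrix (Fin N) (Fin N) (ZMod q))
    (hGinv : ∀ C, G * Ginv C = C)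
    (hbin : ∀ C i j, Ginv C i j = 0 ∨ Ginv C i j = 1)
    (μ0 μ1 : ZMod q) (hμ0 : μ0 = 0 ∨ μ0 = 1)
    (C0 C1 : Matrix (Fin (m + 1)) (Fin N) (ZMod q))
    (hC0 : C0 = A' * S0 + E0 + μ0 • G)
    (hC1 : C1 = A' * S1 + E1 + μ1 • G)
    (β : ℝ) (hE0 : ∀ i j, (zqabs q (E0 i j) : ℝ) ≤ β)
    (hE1 : ∀ i j, (zqabs q (E1 i j) : ℝ) ≤ β) :
    G - C0 * Ginv C1 =
        A' * (-(S0 * Ginv C1) - μ0 • S1) + (-(E0 * Ginv C1) - μ0 • E1) +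
          (1 - μ0 * μ1) • G
      ∧ ∀ i j, (zqabs q ((-(E0 * Ginv C1) - μ0 • E1) i j) : ℝ) ≤ β * (N + 1) := by
  refine ⟨?_, fun i j => ?_⟩
  · rw [hC0]
    exact nand_sub_mul_eq A' S0 S1 E0 E1 G (Ginv C1) μ0 μ1 (hC1 ▸ hGinv C1)
  · simpa using zqabs_nand_noise_le E0 E1 (Ginv C1) (hbin C1) μ0 hμ0 β hE0 hE1 i j

/-- DualHE homomorphic NAND preserves the ciphertext form: if
`C_b = A'S_b + E_b + μ_b G` for bits `μ_b`, and `G⁻¹` produces binary matrices with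
`G · G⁻¹(C) = C`, then `G − C₀ · G⁻¹(C₁) = A'S' + E' + (1 − μ₀μ₁)G` with
`S' = −S₀·G⁻¹(C₁) − μ₀S₁` and `E' = −E₀·G⁻¹(C₁) − μ₀E₁`; moreover if
`‖E₀‖_∞ ≤ β` and `‖E₁‖_∞ ≤ β` then `‖E'‖_∞ ≤ β(N+1)`. -/
theorem dualHE_nand_ciphertext_form (q n m N : ℕ) [NeZero q]
    (A' : Matrix (Fin (m + 1)) (Fin n) (ZMod q))
    (S0 S1 : Matrix (Fin n) (Fin N) (ZMod q))
    (E0 E1 G : Matrix (Fin (m + 1)) (Fin N) (ZMod q))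
    (Ginv : Matrix (Fin (m + 1)) (Fin N) (ZMod q) → Matrix (Fin N) (Fin N) (ZMod q))
    (hGinv : ∀ C, G * Ginv C = C)
    (hbin : ∀ C i j, Ginv C i j = 0 ∨ Ginv C i j = 1)
    (μ0 μ1 : ZMod q) (hμ0 : μ0 = 0 ∨ μ0 = 1) (hμ1 : μ1 = 0 ∨ μ1 = 1)
    (C0 C1 : Matrix (Fin (m + 1)) (Fin N) (ZMod q))
    (hC0 : C0 = A' * S0 + E0 + μ0 • G)
    (hC1 : C1 = A' * S1 + E1 + μ1 • G)
    (β : ℝ) (hE0 : ∀ i j, (zqabs q (E0 i j) : ℝ) ≤ β)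
    (hE1 : ∀ i j, (zqabs q (E1 i j) : ℝ) ≤ β) :
    G - C0 * Ginv C1 =
        A' * (-(S0 * Ginv C1) - μ0 • S1) + (-(E0 * Ginv C1) - μ0 • E1) +
          (1 - μ0 * μ1) • G
      ∧ ∀ i j, (zqabs q ((-(E0 * Ginv C1) - μ0 • E1) i j) : ℝ) ≤ β * (N + 1) :=
  dualHE_nand_ciphertext_form_general q n m N A' S0 S1 E0 E1 G Ginv hGinv hbin μ0 μ1 hμ0 C0 C1 hC0
    hC1 β hE0 hE1
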